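/- Let n ≥ 1 and let Q be an n×n real generator matrix (q_{ab} ≥ 0 for all a ≠ b, and every row sums to zero). Let c > 0 be such that c > −q_{aa} for every a, and set P = I + (1/c)·Q, which is a row-stochastic matrix with nonnegative entries. Assume P is irreducible in the sense that for every pair of indices a, b there exists a natural number k with (P^k)_{ab} > 0. Then there exists a unique probability vector π ∈ ℝ^n (π_a ≥ 0 for all a, Σ_a π_a = 1) satisfying πQ = 0. -/
import Mathlib


/-- For an irreducible `n × n` generator matrix `Q` (irreducibility expressed via
the uniformized stochastic matrix `P = I + (1/c) Q`, where `c` exceeds all the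
rates `-q_{aa}`), there is a unique stationary probability vector `π` with
`π Q = 0`. -/
theorem irreducible_generator_unique_stationary_distribution
    (n : ℕ) (hn : 1 ≤ n) (Q : Matrix (Fin n) (Fin n) ℝ)
    (hoff : ∀ a b, a ≠ b → 0 ≤ Q a b)
    (hrow : ∀ a, ∑ b, Q a b = 0)
    (c : ℝ) (hc : 0 < c) (hcdiag : ∀ a, -Q a a < c)
    (P : Matrix (Fin n) (Fin n) ℝ) (hP : P = 1 + c⁻¹ • Q)
    (hirr : ∀ a b, ∃ k : ℕ, 0 < (P ^ k) a b) :
    ∃! π : Fin n → ℝ,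
      (∀ a, 0 ≤ π a) ∧ (∑ a, π a = 1) ∧ Matrix.vecMul π Q = 0 := by
  classical
  -- entries of P are nonnegative
  have hPnn : ∀ a b, 0 ≤ P a b := by
    intro a b
    rw [hP]
    by_cases h : a = b
    · subst h
      simp only [Matrix.add_apply, Matrix.smul_apply, Matrix.one_apply_eq, smul_eq_mul]
      have h1 : (0:ℝ) < c + Q a a := by linarith [hcdiag a]
      have := mul_pos (inv_pos.mpr hc) h1
      rw [mul_add, inv_mul_cancel₀ hc.ne'] at this
      linarith
    · simp only [Matrix.add_apply, Matrix.smul_apply, Matrix.one_apply_ne h, smul_eq_mul]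
      have := hoff a b h
      positivity
  -- rows of P sum to 1
  have hProw : ∀ a, ∑ b, P a b = 1 := by
    intro a
    rw [hP]
    simp only [Matrix.add_apply, Matrix.smul_apply, smul_eq_mul, Finset.sum_add_distrib,
      ← Finset.mul_sum, hrow, mul_zero, add_zero]
    simp [Matrix.one_apply]
  -- entries of powers of P are nonnegative
  have hPknn : ∀ (k : ℕ) a b, 0 ≤ (P ^ k) a b := by
    intro k
    induction k with
    | zero => intro a b; simp [Matrix.one_apply]; positivity
    | succ k ih =>
      intro a b
      rw [pow_succ, Matrix.mul_apply]
      exact Finset.sum_nonneg fun x _ => mul_nonneg (ih a x) (hPnn x b)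
  -- vecMul preserves total mass
  have hmass : ∀ v : Fin n → ℝ, ∑ b, Matrix.vecMul v P b = ∑ a, v a := by
    intro v
    simp only [Matrix.vecMul, dotProduct]
    rw [Finset.sum_comm]
    simp only [← Finset.mul_sum, hProw, mul_one]
  -- fixed points of P are exactly kernels of Q
  have hfixiff : ∀ v : Fin n → ℝ, Matrix.vecMul v Q = 0 ↔ Matrix.vecMul v P = v := by
    intro v
    have hsm : Matrix.vecMul v (c⁻¹ • Q) = c⁻¹ • Matrix.vecMul v Q := by
      funext b
      simp only [Matrix.vecMul, dotProduct, Matrix.smul_apply, Pi.smul_apply,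
        smul_eq_mul, Finset.mul_sum]
      exact Finset.sum_congr rfl fun x _ => by ring
    rw [hP, Matrix.vecMul_add, Matrix.vecMul_one, hsm]
    constructor
    · intro h; rw [h]; simp
    · intro h
      have h2 : c⁻¹ • Matrix.vecMul v Q = 0 := by
        have := congrArg (fun w => w - v) h
        simpa using this
      rcases smul_eq_zero.mp h2 with h3 | h3
      · exact absurd h3 (inv_ne_zero hc.ne')
      · exact h3
  -- fixed vectors are fixed by powers
  have hfixpow : ∀ (v : Fin n → ℝ), Matrix.vecMul v P = v →
      ∀ k, Matrix.vecMul v (P ^ k) = v := by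
    intro v hv k
    induction k with
    | zero => simp
    | succ k ih => rw [pow_succ, ← Matrix.vecMul_vecMul, ih, hv]
  -- absolute value of a fixed vector is fixed
  have habs : ∀ (v : Fin n → ℝ), Matrix.vecMul v P = v →
      Matrix.vecMul (fun a => |v a|) P = fun a => |v a| := by
    intro v hv
    have hle : ∀ b, |v b| ≤ Matrix.vecMul (fun a => |v a|) P b := by
      intro b
      conv_lhs => rw [← hv]
      simp only [Matrix.vecMul, dotProduct]
      calc |∑ a, v a * P a b| ≤ ∑ a, |v a * P a b| := Finset.abs_sum_le_sum_abs _ _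
        _ = ∑ a, |v a| * P a b := by
            refine Finset.sum_congr rfl fun a _ => ?_
            rw [abs_mul, abs_of_nonneg (hPnn a b)]
    have hsum : ∑ b, (Matrix.vecMul (fun a => |v a|) P b - |v b|) = 0 := by
      rw [Finset.sum_sub_distrib, hmass]
      ring
    have hzero := (Finset.sum_eq_zero_iff_of_nonneg
      (fun b _ => sub_nonneg.mpr (hle b))).mp hsum
    funext b
    have := hzero b (Finset.mem_univ b)
    linarith [sub_eq_zero.mp this]
  -- a nonzero nonnegative fixed vector is strictly positive
  have hpos : ∀ (w : Fin n → ℝ), (∀ a, 0 ≤ w a) → Matrix.vecMul w P = w →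
      (∃ a, w a ≠ 0) → ∀ b, 0 < w b := by
    intro w hwnn hwfix ⟨a, ha⟩ b
    have hwa : 0 < w a := lt_of_le_of_ne (hwnn a) (Ne.symm ha)
    obtain ⟨k, hk⟩ := hirr a b
    have hfx := congrFun (hfixpow w hwfix k) b
    simp only [Matrix.vecMul, dotProduct] at hfx
    have hterm : 0 < w a * (P ^ k) a b := mul_pos hwa hk
    have hsle : w a * (P ^ k) a b ≤ ∑ x, w x * (P ^ k) x b :=
      Finset.single_le_sum (f := fun x => w x * (P ^ k) x b)
        (fun x _ => mul_nonneg (hwnn x) (hPknn k x b)) (Finset.mem_univ a)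
    rw [hfx] at hsle
    linarith
  -- existence of a nonzero fixed vector, via det (P - 1) = 0
  have hdet : (P - 1).det = 0 := by
    rw [← Matrix.exists_mulVec_eq_zero_iff]
    refine ⟨fun _ => 1, ?_, ?_⟩
    · intro h
      have := congrFun h ⟨0, hn⟩
      simp at this
    · funext a
      simp only [Matrix.mulVec, dotProduct, Matrix.sub_apply, mul_one,
        Finset.sum_sub_distrib, hProw, Pi.zero_apply]
      simp [Matrix.one_apply]
  obtain ⟨v, hv0, hvfix⟩ := (Matrix.exists_vecMul_eq_zero_iff).mpr hdet
  rw [Matrix.vecMul_sub, Matrix.vecMul_one, sub_eq_zero] at hvfix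
  -- build the stationary distribution from |v|
  set w : Fin n → ℝ := fun a => |v a| with hw
  have hwfix : Matrix.vecMul w P = w := habs v hvfix
  have hwnn : ∀ a, 0 ≤ w a := fun a => abs_nonneg _
  have hwne : ∃ a, w a ≠ 0 := by
    by_contra h
    push_neg at h
    exact hv0 (funext fun a => abs_eq_zero.mp (h a))
  have hwpos := hpos w hwnn hwfix hwne
  have hS : 0 < ∑ a, w a := by
    have : (⟨0, hn⟩ : Fin n) ∈ Finset.univ := Finset.mem_univ _
    exact Finset.sum_pos (fun a _ => hwpos a) ⟨⟨0, hn⟩, this⟩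
  refine ⟨fun a => (∑ x, w x)⁻¹ * w a, ⟨?_, ?_, ?_⟩, ?_⟩
  · intro a; positivity
  · rw [← Finset.mul_sum, inv_mul_cancel₀ hS.ne']
  · rw [hfixiff]
    have : (fun a => (∑ x, w x)⁻¹ * w a) = (∑ x, w x)⁻¹ • w := by
      funext a; simp
    rw [this, Matrix.smul_vecMul, hwfix]
  · -- uniqueness
    rintro ρ ⟨hρnn, hρ1, hρQ⟩
    -- our candidate
    set π : Fin n → ℝ := fun a => (∑ x, w x)⁻¹ * w a with hπ
    have hπnn : ∀ a, 0 ≤ π a := fun a => by positivity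
    have hπ1 : ∑ a, π a = 1 := by rw [hπ]; rw [← Finset.mul_sum, inv_mul_cancel₀ hS.ne']
    have hπfix : Matrix.vecMul π P = π := by
      have : π = (∑ x, w x)⁻¹ • w := by funext a; simp [hπ]
      rw [this, Matrix.smul_vecMul, hwfix]
    have hρfix : Matrix.vecMul ρ P = ρ := (hfixiff ρ).mp hρQ
    by_contra hne
    set d : Fin n → ℝ := fun a => ρ a - π a with hd
    have hd0 : d ≠ 0 := by
      intro h
      apply hne
      funext a
      have := congrFun h a
      simp only [hd, Pi.zero_apply] at this
      linarith
    have hdfix : Matrix.vecMul d P = d := by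
      have : d = ρ - π := rfl
      rw [this, Matrix.sub_vecMul, hρfix, hπfix]
    have hdsum : ∑ a, d a = 0 := by
      simp only [hd, Finset.sum_sub_distrib, hρ1, hπ1]
      ring
    have hdabs : Matrix.vecMul (fun a => |d a|) P = fun a => |d a| := habs d hdfix
    have hdne : ∃ a, |d a| ≠ 0 := by
      by_contra h
      push_neg at h
      exact hd0 (funext fun a => abs_eq_zero.mp (h a))
    have hdpos : ∀ b, 0 < |d b| := hpos _ (fun a => abs_nonneg _) hdabs hdne
    -- there is a positive and a negative entry
    have hap : ∃ a, 0 < d a := by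
      by_contra h
      push_neg at h
      have h2 : ∀ a, d a < 0 := fun a =>
        lt_of_le_of_ne (h a) (fun he => (hdpos a).ne' (by rw [he]; simp))
      have : ∑ a, d a < 0 :=
        Finset.sum_neg (fun a _ => h2 a) ⟨⟨0, hn⟩, Finset.mem_univ _⟩
      linarith
    have hbp : ∃ b, d b < 0 := by
      by_contra h
      push_neg at h
      have h2 : ∀ a, 0 < d a := fun a =>
        lt_of_le_of_ne (h a) (fun he => (hdpos a).ne' (by rw [← he]; simp))
      have : 0 < ∑ a, d a :=
        Finset.sum_pos (fun a _ => h2 a) ⟨⟨0, hn⟩, Finset.mem_univ _⟩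
      linarith
    obtain ⟨a, hap⟩ := hap
    obtain ⟨b, hbp⟩ := hbp
    obtain ⟨k, hk⟩ := hirr a b
    have hdk := congrFun (hfixpow d hdfix k) b
    have hak := congrFun (hfixpow (fun a => |d a|) hdabs k) b
    simp only [Matrix.vecMul, dotProduct] at hdk hak
    have hkey : |d b| + d b = ∑ x, (|d x| + d x) * (P ^ k) x b := by
      rw [← hak, ← hdk]
      rw [← Finset.sum_add_distrib]
      refine Finset.sum_congr rfl fun x _ => by ring
    have hterm : 0 < (|d a| + d a) * (P ^ k) a b := by
      have : 0 < |d a| + d a := by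
        have := abs_nonneg (d a); linarith
      exact mul_pos this hk
    have hsle : (|d a| + d a) * (P ^ k) a b ≤ ∑ x, (|d x| + d x) * (P ^ k) x b := by
      refine Finset.single_le_sum (f := fun x => (|d x| + d x) * (P ^ k) x b)
        (fun x _ => mul_nonneg ?_ (hPknn k x b)) (Finset.mem_univ a)
      have := abs_nonneg (d x)
      have := neg_abs_le (d x)
      linarith
    rw [← hkey] at hsle
    have : |d b| + d b = 0 := by
      rw [abs_of_neg hbp]; ring
    linarith
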